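/- arXiv:1809.08519 — 2 statements merged into one kernel-verified Lean document; each statement's English description precedes it below -/
import Mathlib

section
/- Fix θ ∈ (0,1) and p₊ > 1. There exists a constant C = C(θ, p₊) > 0 with the following property: for every ball B_R ⊂ ℝⁿ, every measurable exponent function p : ℝⁿ → ℝ with 1 < p₋ ≤ p(x) ≤ p₊ for all x, every measurable h : ℝⁿ → ℝ with ∫_{B_R} |h(x)|^{p(x)} dx < ∞, all constants A > 0, B ≥ 0, all radii 0 ≤ r < R, and every nonnegative bounded function f on [r, R] satisfying f(t) ≤ θ·f(s) + A·∫_{B_R} (|h(x)|/(s−t))^{p(x)} dx + B whenever r ≤ t < s ≤ R, one has f(r) ≤ C·( A·∫_{B_R} (|h(x)|/(R−r))^{p(x)} dx + B ). -/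
open MeasureTheory

lemma geom_sum_le_inv_one_sub {x : ℝ} (hx0 : 0 ≤ x) (hx1 : x < 1) (k : ℕ) :
    ∑ i ∈ Finset.range k, x ^ i ≤ (1 - x)⁻¹ := by
  have h1 : ∑ i ∈ Finset.range k, x ^ i ≤ ∑' i : ℕ, x ^ i :=
    Summable.sum_le_tsum (Finset.range k) (fun i _ => pow_nonneg hx0 i)
      (summable_geometric_of_lt_one hx0 hx1)
  rwa [tsum_geometric_of_lt_one hx0 hx1] at h1

set_option maxHeartbeats 1000000 in
/-- Lemma 4.2: iteration ("hole-filling") lemma with variable exponents. -/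
theorem stmt_1 (θ pUp : ℝ) (hθ : θ ∈ Set.Ioo (0 : ℝ) 1) (hpUp : 1 < pUp) :
    ∃ C : ℝ, 0 < C ∧
      ∀ (n : ℕ) (c : EuclideanSpace ℝ (Fin n)) (R : ℝ)
        (p h : EuclideanSpace ℝ (Fin n) → ℝ) (pLow A B r : ℝ) (f : ℝ → ℝ),
        Measurable p → Measurable h →
        1 < pLow → (∀ x, pLow ≤ p x ∧ p x ≤ pUp) →
        IntegrableOn (fun x => |h x| ^ p x) (Metric.ball c R) volume →
        0 < A → 0 ≤ B → 0 ≤ r → r < R →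
        (∀ t ∈ Set.Icc r R, 0 ≤ f t) →
        BddAbove (f '' Set.Icc r R) →
        (∀ t s : ℝ, r ≤ t → t < s → s ≤ R →
          f t ≤ θ * f s + A * (∫ x in Metric.ball c R, (|h x| / (s - t)) ^ p x) + B) →
        f r ≤ C * (A * (∫ x in Metric.ball c R, (|h x| / (R - r)) ^ p x) + B) := by
  obtain ⟨hθ0, hθ1⟩ := hθ
  have hpUp0 : (0:ℝ) < pUp := lt_trans one_pos hpUp
  set L : ℝ := θ ^ (1/(2*pUp) : ℝ) with hLdef
  have hL0 : 0 < L := Real.rpow_pos_of_pos hθ0 _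
  have hL1 : L < 1 := Real.rpow_lt_one hθ0.le hθ1 (by positivity)
  have h1L : 0 < 1 - L := by linarith
  set μ : ℝ := θ ^ ((1:ℝ)/2) with hμdef
  have hμ0 : 0 < μ := Real.rpow_pos_of_pos hθ0 _
  have hμ1 : μ < 1 := Real.rpow_lt_one hθ0.le hθ1 (by norm_num)
  have hLp : L ^ pUp = μ := by
    rw [hLdef, ← Real.rpow_mul hθ0.le, hμdef]
    congr 1
    field_simp
  set E : ℝ := (L⁻¹) ^ pUp with hEdef
  have hE0 : 0 < E := Real.rpow_pos_of_pos (inv_pos.2 hL0) _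
  have hEμ : E = μ⁻¹ := by rw [hEdef, Real.inv_rpow hL0.le, hLp]
  have hμμ : μ * μ = θ := by
    rw [hμdef, ← Real.rpow_add hθ0]
    norm_num
  have hθE : θ * E = μ := by
    rw [hEμ]
    field_simp
    linarith [hμμ]
  set D : ℝ := ((1 - L)⁻¹) ^ pUp with hDdef
  have hD0 : 0 < D := Real.rpow_pos_of_pos (inv_pos.2 h1L) _
  set C : ℝ := max (D * (1 - μ)⁻¹) ((1 - θ)⁻¹) with hCdef
  have hC0 : 0 < C := lt_of_lt_of_le (inv_pos.2 (by linarith)) (le_max_right _ _)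
  refine ⟨C, hC0, ?_⟩
  intro n c R p h pLow A B r f hp hh hpLow hpbound hIntH hA hB hr hrR hf0 hfbdd hstep
  have hRr : 0 < R - r := by linarith
  set I : ℝ := ∫ x in Metric.ball c R, (|h x| / (R - r)) ^ p x with hIdef
  have hI0 : 0 ≤ I :=
    setIntegral_nonneg measurableSet_ball (fun x _ => Real.rpow_nonneg (by positivity) _)
  have hmeas : Measurable fun x => (|h x| / (R - r)) ^ p x :=
    (hh.abs.div_const _).pow hp
  -- integrability of the reference integrand
  have hIntI : IntegrableOn (fun x => (|h x| / (R - r)) ^ p x) (Metric.ball c R) volume := by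
    set K : ℝ := max ((R - r) ^ (-pLow)) ((R - r) ^ (-pUp)) with hKdef
    apply Integrable.mono' (hIntH.const_mul K) hmeas.aestronglyMeasurable
    filter_upwards with x
    rw [Real.norm_eq_abs, abs_of_nonneg (Real.rpow_nonneg (by positivity) _)]
    have heq : (|h x| / (R - r)) ^ p x = |h x| ^ p x * (R - r) ^ (-(p x)) := by
      rw [Real.div_rpow (abs_nonneg _) hRr.le, Real.rpow_neg hRr.le, div_eq_mul_inv]
    rw [heq]
    have hK : (R - r) ^ (-(p x)) ≤ K := by
      rcases le_or_gt 1 (R - r) with hb | hb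
      · exact le_trans
          (Real.rpow_le_rpow_of_exponent_le hb (neg_le_neg (hpbound x).1))
          (le_max_left _ _)
      · exact le_trans
          (Real.rpow_le_rpow_of_exponent_ge hRr hb.le (neg_le_neg (hpbound x).2))
          (le_max_right _ _)
    calc |h x| ^ p x * (R - r) ^ (-(p x))
        ≤ |h x| ^ p x * K :=
          mul_le_mul_of_nonneg_left hK (Real.rpow_nonneg (abs_nonneg _) _)
      _ = K * |h x| ^ p x := mul_comm _ _
  -- key comparison lemma
  have key : ∀ δ : ℝ, 0 < δ → δ ≤ R - r →
      (∫ x in Metric.ball c R, (|h x| / δ) ^ p x) ≤ ((R - r) / δ) ^ pUp * I := by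
    intro δ hδ0 hδle
    have hq1 : 1 ≤ (R - r) / δ := (one_le_div hδ0).2 hδle
    have hptwise : ∀ x, (|h x| / δ) ^ p x
        ≤ ((R - r) / δ) ^ pUp * (|h x| / (R - r)) ^ p x := by
      intro x
      have h1 : |h x| / δ = ((R - r) / δ) * (|h x| / (R - r)) := by
        field_simp
      rw [h1, Real.mul_rpow (by positivity) (by positivity)]
      exact mul_le_mul_of_nonneg_right
        (Real.rpow_le_rpow_of_exponent_le hq1 (hpbound x).2)
        (Real.rpow_nonneg (by positivity) _)
    calc (∫ x in Metric.ball c R, (|h x| / δ) ^ p x)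
        ≤ ∫ x in Metric.ball c R, ((R - r) / δ) ^ pUp * (|h x| / (R - r)) ^ p x := by
          apply integral_mono_of_nonneg
          · filter_upwards with x using Real.rpow_nonneg (by positivity) _
          · exact hIntI.const_mul _
          · filter_upwards with x using hptwise x
      _ = ((R - r) / δ) ^ pUp * I := by rw [integral_const_mul]
  -- the radius sequence
  set t : ℕ → ℝ := fun k => r + (1 - L ^ k) * (R - r) with htdef
  have hLk1 : ∀ k : ℕ, L ^ k ≤ 1 := fun k => pow_le_one₀ hL0.le hL1.le
  have hLk0 : ∀ k : ℕ, 0 < L ^ k := fun k => pow_pos hL0 k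
  have htmem : ∀ k, t k ∈ Set.Icc r R := by
    intro k
    constructor
    · have : 0 ≤ (1 - L ^ k) * (R - r) :=
        mul_nonneg (by linarith [hLk1 k]) hRr.le
      simp only [htdef]; linarith
    · have : (1 - L ^ k) * (R - r) ≤ 1 * (R - r) :=
        mul_le_mul_of_nonneg_right (by linarith [hLk0 k]) hRr.le
      simp only [htdef]; linarith
  -- one iteration step
  have step : ∀ k : ℕ, f (t k) ≤ θ * f (t (k + 1)) + A * (D * E ^ k) * I + B := by
    intro k
    have hst : t (k + 1) - t k = L ^ k * (1 - L) * (R - r) := by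
      simp only [htdef]; ring
    have hδ0 : 0 < L ^ k * (1 - L) * (R - r) := by positivity
    have hδle : L ^ k * (1 - L) * (R - r) ≤ R - r := by
      have h2 : L ^ k * (1 - L) ≤ 1 := by
        nlinarith [hLk1 k, (hLk0 k).le]
      nlinarith
    have hts : t k < t (k + 1) := by linarith [hst ▸ hδ0]
    have happ := hstep (t k) (t (k + 1)) (htmem k).1 hts (htmem (k + 1)).2
    rw [hst] at happ
    have h5 : ((R - r) / (L ^ k * (1 - L) * (R - r))) ^ pUp = D * E ^ k := by
      have h1 : (R - r) / (L ^ k * (1 - L) * (R - r)) = (1 - L)⁻¹ * (L⁻¹) ^ k := by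
        rw [inv_pow]
        field_simp
      rw [h1, Real.mul_rpow (by positivity) (by positivity), hDdef, hEdef,
        ← Real.rpow_natCast (L⁻¹) k, ← Real.rpow_mul (by positivity),
        mul_comm (k : ℝ) pUp, Real.rpow_mul (by positivity), Real.rpow_natCast]
    have h3 : A * (∫ x in Metric.ball c R, (|h x| / (L ^ k * (1 - L) * (R - r))) ^ p x)
        ≤ A * (D * E ^ k) * I := by
      have h4 := key _ hδ0 hδle
      rw [h5] at h4
      calc A * (∫ x in Metric.ball c R, (|h x| / (L ^ k * (1 - L) * (R - r))) ^ p x)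
          ≤ A * (D * E ^ k * I) := mul_le_mul_of_nonneg_left h4 hA.le
        _ = A * (D * E ^ k) * I := by ring
    linarith
  -- the iterated estimate
  have claim : ∀ k : ℕ, f r ≤ θ ^ k * f (t k)
      + ∑ i ∈ Finset.range k, θ ^ i * (A * (D * E ^ i) * I + B) := by
    intro k
    induction k with
    | zero => simp [htdef]
    | succ k ih =>
      have h2 := step k
      calc f r ≤ θ ^ k * f (t k)
          + ∑ i ∈ Finset.range k, θ ^ i * (A * (D * E ^ i) * I + B) := ih
        _ ≤ θ ^ k * (θ * f (t (k + 1)) + A * (D * E ^ k) * I + B)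
          + ∑ i ∈ Finset.range k, θ ^ i * (A * (D * E ^ i) * I + B) := by
            have := mul_le_mul_of_nonneg_left h2 (pow_nonneg hθ0.le k)
            linarith
        _ = θ ^ (k + 1) * f (t (k + 1))
          + ∑ i ∈ Finset.range (k + 1), θ ^ i * (A * (D * E ^ i) * I + B) := by
            rw [Finset.sum_range_succ]; ring
  -- bound the sum by C * (A * I + B)
  have hsum : ∀ k : ℕ,
      ∑ i ∈ Finset.range k, θ ^ i * (A * (D * E ^ i) * I + B) ≤ C * (A * I + B) := by
    intro k
    have hterm : ∀ i : ℕ, θ ^ i * (A * (D * E ^ i) * I + B)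
        = (A * D * I) * μ ^ i + B * θ ^ i := by
      intro i
      rw [← hθE, mul_pow]
      ring
    have h1 : ∑ i ∈ Finset.range k, θ ^ i * (A * (D * E ^ i) * I + B)
        = (A * D * I) * (∑ i ∈ Finset.range k, μ ^ i)
          + B * (∑ i ∈ Finset.range k, θ ^ i) := by
      rw [Finset.mul_sum, Finset.mul_sum, ← Finset.sum_add_distrib]
      exact Finset.sum_congr rfl fun i _ => hterm i
    rw [h1]
    have hADI : 0 ≤ A * D * I := by positivity
    have hg1 := geom_sum_le_inv_one_sub hμ0.le hμ1 k
    have hg2 := geom_sum_le_inv_one_sub hθ0.le hθ1 k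
    have hb1 : (A * D * I) * (∑ i ∈ Finset.range k, μ ^ i)
        ≤ (A * D * I) * (1 - μ)⁻¹ := mul_le_mul_of_nonneg_left hg1 hADI
    have hb2 : B * (∑ i ∈ Finset.range k, θ ^ i) ≤ B * (1 - θ)⁻¹ :=
      mul_le_mul_of_nonneg_left hg2 hB
    have hc1 : (A * D * I) * (1 - μ)⁻¹ ≤ C * (A * I) := by
      have h2 : D * (1 - μ)⁻¹ ≤ C := le_max_left _ _
      have hAI : 0 ≤ A * I := mul_nonneg hA.le hI0
      calc (A * D * I) * (1 - μ)⁻¹ = (D * (1 - μ)⁻¹) * (A * I) := by ring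
        _ ≤ C * (A * I) := mul_le_mul_of_nonneg_right h2 hAI
    have hc2 : B * (1 - θ)⁻¹ ≤ C * B := by
      have h2 : (1 - θ)⁻¹ ≤ C := le_max_right _ _
      calc B * (1 - θ)⁻¹ = (1 - θ)⁻¹ * B := mul_comm _ _
        _ ≤ C * B := mul_le_mul_of_nonneg_right h2 hB
    have : C * (A * I) + C * B = C * (A * I + B) := by ring
    linarith
  -- pass to the limit
  set M : ℝ := sSup (f '' Set.Icc r R) with hMdef
  have hfM : ∀ k : ℕ, f (t k) ≤ M :=
    fun k => le_csSup hfbdd ⟨t k, htmem k, rfl⟩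
  have hmain : ∀ k : ℕ, f r ≤ θ ^ k * M + C * (A * I + B) := by
    intro k
    have h1 := claim k
    have h2 : θ ^ k * f (t k) ≤ θ ^ k * M :=
      mul_le_mul_of_nonneg_left (hfM k) (pow_nonneg hθ0.le k)
    linarith [hsum k]
  have hlim : Filter.Tendsto (fun k : ℕ => θ ^ k * M + C * (A * I + B))
      Filter.atTop (nhds (C * (A * I + B))) := by
    have h1 : Filter.Tendsto (fun k : ℕ => θ ^ k * M) Filter.atTop (nhds 0) := by
      have := (tendsto_pow_atTop_nhds_zero_of_lt_one hθ0.le hθ1).mul_const M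
      simpa using this
    have := h1.add_const (C * (A * I + B))
    simpa using this
  exact ge_of_tendsto' hlim hmain
end

section
/- Let (S, μ) be a measure space with μ(S) < ∞, let γ ∈ (0,1], λ₊ ≥ λ₋ > 0, let δ ∈ (0,1], and let p : S → ℝ be a measurable function with p(x) > 1 for all x ∈ S. Then for all real-valued measurable functions z and u on S, ∫_S ( F_γ(z(x)) − F_γ(u(x)) ) dμ(x) ≤ (λ₊ + λ₋)·( ∫_S (|z(x) − u(x)|/δ)^{p(x)} dμ(x) + μ(S) ), where the integrals on the right are taken in [0, ∞]. -/
open MeasureTheory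

/-- The two-phase nonlinearity `F_γ` for `γ ∈ (0,1]`:
`F_γ(t) = λ₊ (t⁺)^γ + λ₋ (t⁻)^γ`. -/
noncomputable def Fgamma (lp lm γ t : ℝ) : ℝ :=
  lp * (max t 0) ^ γ + lm * (max (-t) 0) ^ γ

lemma rpow_subadd {a b γ : ℝ} (ha : 0 ≤ a) (hb : 0 ≤ b) (hγ0 : 0 ≤ γ) (hγ1 : γ ≤ 1) :
    (a + b) ^ γ ≤ a ^ γ + b ^ γ := by
  have h := NNReal.rpow_add_le_add_rpow a.toNNReal b.toNNReal hγ0 hγ1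
  have h2 := NNReal.coe_le_coe.2 h
  push_cast at h2
  rwa [Real.coe_toNNReal a ha, Real.coe_toNNReal b hb] at h2

lemma pos_part_diff {t s γ : ℝ} (hγ0 : 0 < γ) (hγ1 : γ ≤ 1) :
    (max t 0) ^ γ - (max s 0) ^ γ ≤ |t - s| ^ γ := by
  have h1 : max t 0 ≤ max s 0 + |t - s| := by
    apply max_le
    · calc t = s + (t - s) := by ring
        _ ≤ max s 0 + |t - s| := add_le_add (le_max_left _ _) (le_abs_self _)
    · have := abs_nonneg (t - s)
      have := le_max_right s 0
      linarith
  have h2 : (max t 0) ^ γ ≤ (max s 0 + |t - s|) ^ γ :=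
    Real.rpow_le_rpow (le_max_right t 0) h1 hγ0.le
  have h3 := rpow_subadd (le_max_right s 0) (abs_nonneg (t - s)) hγ0.le hγ1
  linarith

lemma Fdiff_le {lp lm γ δ pe t s : ℝ} (hγ0 : 0 < γ) (hγ1 : γ ≤ 1) (hlm : 0 ≤ lm)
    (hlp : 0 ≤ lp) (hδ0 : 0 < δ) (hδ1 : δ ≤ 1) (hpe : 1 < pe) :
    Fgamma lp lm γ t - Fgamma lp lm γ s ≤ (lp + lm) * ((|t - s| / δ) ^ pe + 1) := by
  set a := |t - s| with hadef
  have ha : 0 ≤ a := abs_nonneg _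
  have h1 := pos_part_diff (t := t) (s := s) hγ0 hγ1
  have h2 : (max (-t) 0) ^ γ - (max (-s) 0) ^ γ ≤ a ^ γ := by
    have := pos_part_diff (t := -t) (s := -s) hγ0 hγ1
    rwa [show -t - -s = -(t - s) by ring, abs_neg] at this
  have hstep : a ^ γ ≤ (a / δ) ^ γ :=
    Real.rpow_le_rpow ha (by rw [le_div_iff₀ hδ0]; nlinarith) hγ0.le
  have hstep2 : (a / δ) ^ γ ≤ (a / δ) ^ pe + 1 := by
    rcases le_or_gt (a / δ) 1 with h | h
    · have hle := Real.rpow_le_one (div_nonneg ha hδ0.le) h hγ0.le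
      have hnn : (0 : ℝ) ≤ (a / δ) ^ pe := Real.rpow_nonneg (div_nonneg ha hδ0.le) _
      linarith
    · have := Real.rpow_le_rpow_of_exponent_le h.le (le_trans hγ1 hpe.le)
      linarith
  have e1 : lp * ((max t 0) ^ γ - (max s 0) ^ γ) ≤ lp * a ^ γ :=
    mul_le_mul_of_nonneg_left h1 hlp
  have e2 : lm * ((max (-t) 0) ^ γ - (max (-s) 0) ^ γ) ≤ lm * a ^ γ :=
    mul_le_mul_of_nonneg_left h2 hlm
  have e3 : (lp + lm) * a ^ γ ≤ (lp + lm) * ((a / δ) ^ pe + 1) :=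
    mul_le_mul_of_nonneg_left (hstep.trans hstep2) (by linarith)
  rw [mul_sub] at e1 e2
  rw [add_mul] at e3
  simp only [Fgamma]
  rw [add_mul] at e3 ⊢
  linarith

lemma ofReal_max_zero (a : ℝ) : ENNReal.ofReal (max a 0) = ENNReal.ofReal a := by
  rcases le_or_gt a 0 with h | h
  · rw [max_eq_right h, ENNReal.ofReal_zero, ENNReal.ofReal_of_nonpos h]
  · rw [max_eq_left h.le]

/-- Integral estimate (4.4) in the higher integrability proof (Proposition 4.1). -/
theorem stmt_10 {S : Type*} [MeasurableSpace S] (μ : Measure S) [IsFiniteMeasure μ]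
    (γ lp lm δ : ℝ) (hγ : γ ∈ Set.Ioc (0 : ℝ) 1) (hlm : 0 < lm) (hl : lm ≤ lp)
    (hδ : δ ∈ Set.Ioc (0 : ℝ) 1)
    (p : S → ℝ) (hp : Measurable p) (hp1 : ∀ x, 1 < p x)
    (z u : S → ℝ) (hz : Measurable z) (hu : Measurable u) :
    ENNReal.ofReal (∫ x, (Fgamma lp lm γ (z x) - Fgamma lp lm γ (u x)) ∂μ) ≤
      ENNReal.ofReal (lp + lm) *
        ((∫⁻ x, ENNReal.ofReal ((|z x - u x| / δ) ^ p x) ∂μ) + μ Set.univ) := by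
  obtain ⟨hγ0, hγ1⟩ := hγ
  obtain ⟨hδ0, hδ1⟩ := hδ
  set f := fun x => Fgamma lp lm γ (z x) - Fgamma lp lm γ (u x) with hf
  by_cases hint : Integrable f μ
  · have hof : ENNReal.ofReal (∫ x, f x ∂μ) ≤ ∫⁻ x, ENNReal.ofReal (f x) ∂μ := by
      calc ENNReal.ofReal (∫ x, f x ∂μ)
          ≤ ENNReal.ofReal (∫ x, max (f x) 0 ∂μ) :=
            ENNReal.ofReal_le_ofReal
              (integral_mono hint hint.pos_part (fun x => le_max_left _ _))
        _ = ∫⁻ x, ENNReal.ofReal (max (f x) 0) ∂μ :=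
            ofReal_integral_eq_lintegral_ofReal hint.pos_part
              (ae_of_all _ fun x => le_max_right _ _)
        _ = ∫⁻ x, ENNReal.ofReal (f x) ∂μ := by simp_rw [ofReal_max_zero]
    refine hof.trans ?_
    have key : ∀ x, ENNReal.ofReal (f x) ≤
        ENNReal.ofReal (lp + lm) * (ENNReal.ofReal ((|z x - u x| / δ) ^ p x) + 1) := by
      intro x
      calc ENNReal.ofReal (f x)
          ≤ ENNReal.ofReal ((lp + lm) * ((|z x - u x| / δ) ^ p x + 1)) :=
            ENNReal.ofReal_le_ofReal
              (Fdiff_le hγ0 hγ1 hlm.le (hlm.le.trans hl) hδ0 hδ1 (hp1 x))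
        _ = ENNReal.ofReal (lp + lm) *
              ENNReal.ofReal ((|z x - u x| / δ) ^ p x + 1) :=
            ENNReal.ofReal_mul (by linarith)
        _ = ENNReal.ofReal (lp + lm) *
              (ENNReal.ofReal ((|z x - u x| / δ) ^ p x) + 1) := by
            rw [ENNReal.ofReal_add
              (Real.rpow_nonneg (div_nonneg (abs_nonneg _) hδ0.le) _) zero_le_one,
              ENNReal.ofReal_one]
    calc ∫⁻ x, ENNReal.ofReal (f x) ∂μ
        ≤ ∫⁻ x, ENNReal.ofReal (lp + lm) *
            (ENNReal.ofReal ((|z x - u x| / δ) ^ p x) + 1) ∂μ := lintegral_mono key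
      _ = ENNReal.ofReal (lp + lm) *
            ∫⁻ x, (ENNReal.ofReal ((|z x - u x| / δ) ^ p x) + 1) ∂μ :=
          lintegral_const_mul' _ _ ENNReal.ofReal_ne_top
      _ = ENNReal.ofReal (lp + lm) *
            ((∫⁻ x, ENNReal.ofReal ((|z x - u x| / δ) ^ p x) ∂μ) + μ Set.univ) := by
          rw [lintegral_add_right _ measurable_const, lintegral_const, one_mul]
  · rw [integral_undef hint]
    simp
end
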